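/- arXiv:1107.0079 — 5 statements merged into one kernel-verified Lean document; each statement's English description precedes it below -/
import Mathlib

section
/- For every sequence (d_n) of positive reals with (log n)/d_n → 0, one has limsup_{n→∞} d_n · P(S_n > n d_n) ≤ 1; equivalently, P(S_n > n d_n) ≤ (1 + o(1)) d_n^{−1} as n → ∞. -/
/-!
Truncate at `M = (1 - δ) n d_n`. The event that some `ξ_i` exceeds `M` has probability at most
`n P(ξ > M) ~ 1 / ((1 - δ) d_n)`: this is the main term. On the complementary event the truncated
sum exceeds `n d_n`, which a Chernoff bound with `t = (1 + δ) log d_n / (n d_n)` makes negligible.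
Cutting `[0, M]` at the dyadic levels `M 2^(j - K)` and using `P(ξ > x) ≤ C / x` on each layer
gives `E exp (t min(ξ, M)) ≤ exp (t R)` with
`R = truncationRemainder C M (t M) = O(log (n d_n) + exp (t M))`, which is `o(d_n)` because
`t M = (1 - δ²) log d_n`. The Chernoff term is then `d_n ^ (-1 - δ + o(1))`, and letting `δ → 0`
gives the claim.
-/

open MeasureTheory Filter

open Real Finset ProbabilityTheory Asymptotics Topology

lemma Real.exp_sub_exp_le_mul_exp (x y : ℝ) : exp y - exp x ≤ (y - x) * exp y := by
  have hxy : exp x = exp (x - y) * exp y := by rw [← exp_add, sub_add_cancel]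
  nlinarith [add_one_le_exp (x - y), exp_pos y]

lemma Real.exp_mul_le_one_add_mul_exp {t : ℝ} (ht₀ : 0 ≤ t) (ht₁ : t ≤ 1) (s : ℝ) :
    exp (t * s) ≤ 1 + t * exp s := by
  have h := convexOn_exp.2 (Set.mem_univ 0) (Set.mem_univ s) (sub_nonneg.2 ht₁) ht₀
    (sub_add_cancel 1 t)
  simp only [smul_eq_mul, mul_zero, zero_add, exp_zero, mul_one] at h
  linarith

lemma Monotone.apply_min_le_add_sum {g : ℝ → ℝ} (hg : Monotone g) {b : ℕ → ℝ} (hb : Monotone b)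
    {y : ℝ} (hy : b 0 ≤ y) (K : ℕ) :
    g (min y (b K)) ≤
      g (b 0) + ∑ j ∈ range K, (g (b (j + 1)) - g (b j)) * (Set.Ioi (b j)).indicator 1 y := by
  induction K with
  | zero => simp [min_eq_right hy]
  | succ K ih =>
    rw [sum_range_succ]
    by_cases hK : b K < y
    · have hstep : g (min y (b (K + 1))) ≤ g (b (K + 1)) := hg (min_le_right _ _)
      rw [min_eq_right hK.le] at ih
      simp only [Set.indicator_of_mem (Set.mem_Ioi.2 hK), Pi.one_apply, mul_one]
      linarith
    · rw [not_lt] at hK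
      rw [min_eq_left (hK.trans (hb K.le_succ)), Set.indicator_of_notMem (Set.notMem_Ioi.2 hK),
        mul_zero, add_zero]
      rwa [min_eq_left hK] at ih

lemma Real.exp_sub_one_le_exp_one_mul {s : ℝ} (hs₀ : 0 ≤ s) (hs₁ : s ≤ 1) :
    exp s - 1 ≤ exp 1 * s := calc
  exp s - 1 ≤ s * exp s := by simpa using exp_sub_exp_le_mul_exp 0 s
  _ ≤ exp 1 * s := by rw [mul_comm]; gcongr

lemma Real.exp_sub_exp_mul_le_mul_exp {t x y q C : ℝ} (ht : 0 ≤ t) (hx : 0 < x)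
    (hyx : y ≤ 2 * x) (hq₀ : 0 ≤ q) (hq : q ≤ C / x) :
    (exp (t * y) - exp (t * x)) * q ≤ t * C * exp (t * y) := calc
  (exp (t * y) - exp (t * x)) * q ≤ t * x * exp (t * y) * (C / x) := by
    refine mul_le_mul ?_ hq hq₀ (by positivity)
    refine (exp_sub_exp_le_mul_exp _ _).trans ?_
    rw [← mul_sub]
    gcongr
    linarith
  _ = t * C * exp (t * y) := by field_simp

lemma sum_range_two_pow_div_two_pow_le (k : ℕ) :
    ∑ j ∈ range k, (2 : ℝ) ^ (j + 2) / 2 ^ (k + 1) ≤ 2 := by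
  have h := geom_sum_mul (2 : ℝ) k
  simp only [show (2 : ℝ) - 1 = 1 by norm_num, mul_one] at h
  simp_rw [pow_add, ← sum_div, ← sum_mul, h, pow_succ]
  rw [div_le_iff₀ (by positivity)]
  nlinarith

noncomputable def dyadicLevel (M : ℝ) (K j : ℕ) : ℝ := if j = 0 then 0 else M * 2 ^ j / 2 ^ K

section dyadicLevel

variable {C M t q : ℝ} {K j : ℕ}

@[simp] lemma dyadicLevel_zero : dyadicLevel M K 0 = 0 := if_pos rfl

lemma dyadicLevel_of_ne_zero (hj : j ≠ 0) : dyadicLevel M K j = M * 2 ^ j / 2 ^ K := if_neg hj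

lemma dyadicLevel_self (hK : K ≠ 0) : dyadicLevel M K K = M := by
  rw [dyadicLevel_of_ne_zero hK, mul_div_assoc, div_self (by positivity), mul_one]

lemma dyadicLevel_succ (hj : j ≠ 0) : dyadicLevel M K (j + 1) = 2 * dyadicLevel M K j := by
  rw [dyadicLevel_of_ne_zero hj, dyadicLevel_of_ne_zero j.succ_ne_zero, pow_succ]
  ring

lemma monotone_dyadicLevel (hM : 0 ≤ M) : Monotone (dyadicLevel M K) := by
  refine monotone_nat_of_le_succ fun j => ?_
  rcases eq_or_ne j 0 with rfl | hj
  · rw [zero_add, dyadicLevel_zero, dyadicLevel_of_ne_zero one_ne_zero]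
    positivity
  · rw [dyadicLevel_succ hj]
    have : 0 ≤ dyadicLevel M K j := by rw [dyadicLevel_of_ne_zero hj]; positivity
    linarith

lemma exp_sub_exp_dyadicLevel_zero_mul_le (hM : 0 < M) (hMK : M ≤ 2 ^ K) (ht₀ : 0 ≤ t)
    (ht : t ≤ 1 / 2) (hq₁ : q ≤ 1) :
    (exp (t * dyadicLevel M K 1) - exp (t * dyadicLevel M K 0)) * q ≤ 2 * exp 1 * t := by
  have hb₁ : dyadicLevel M K 1 ≤ 2 := by
    rw [dyadicLevel_of_ne_zero one_ne_zero, div_le_iff₀ (by positivity), pow_one]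
    linarith
  have hb₁₀ : 0 ≤ dyadicLevel M K 1 := by rw [dyadicLevel_of_ne_zero one_ne_zero]; positivity
  calc (exp (t * dyadicLevel M K 1) - exp (t * dyadicLevel M K 0)) * q
      ≤ exp (t * dyadicLevel M K 1) - 1 := by
        rw [dyadicLevel_zero, mul_zero, exp_zero]
        exact mul_le_of_le_one_right (sub_nonneg.2 (one_le_exp (by positivity))) hq₁
    _ ≤ exp 1 * (t * dyadicLevel M K 1) :=
        exp_sub_one_le_exp_one_mul (by positivity) (by nlinarith)
    _ ≤ exp 1 * (t * 2) := by gcongr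
    _ = 2 * exp 1 * t := by ring

lemma exp_sub_exp_dyadicLevel_succ_mul_le (hM : 0 < M) (ht₀ : 0 ≤ t) (hj : j + 2 ≤ K)
    (hq₀ : 0 ≤ q) (hq : q ≤ C / dyadicLevel M K (j + 1)) :
    (exp (t * dyadicLevel M K (j + 2)) - exp (t * dyadicLevel M K (j + 1))) * q ≤
      t * C + t * C * exp (t * M) * (2 ^ (j + 2) / 2 ^ K) := by
  have hbj : 0 < dyadicLevel M K (j + 1) := by
    rw [dyadicLevel_of_ne_zero j.succ_ne_zero]; positivity
  have hweight : t * dyadicLevel M K (j + 2) = 2 ^ (j + 2) / 2 ^ K * (t * M) := by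
    rw [dyadicLevel_of_ne_zero (by omega)]; ring
  have hC : 0 ≤ C := by
    have := mul_le_mul_of_nonneg_right (hq₀.trans hq) hbj.le
    rwa [zero_mul, div_mul_cancel₀ _ hbj.ne'] at this
  calc (exp (t * dyadicLevel M K (j + 2)) - exp (t * dyadicLevel M K (j + 1))) * q
      ≤ t * C * exp (t * dyadicLevel M K (j + 2)) :=
        exp_sub_exp_mul_le_mul_exp ht₀ hbj (dyadicLevel_succ j.succ_ne_zero).le hq₀ hq
    _ ≤ t * C * (1 + 2 ^ (j + 2) / 2 ^ K * exp (t * M)) := by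
        rw [hweight]
        gcongr
        refine exp_mul_le_one_add_mul_exp (by positivity) ?_ _
        rw [div_le_one (by positivity)]
        exact pow_le_pow_right₀ one_le_two hj
    _ = _ := by ring

lemma sum_exp_dyadicLevel_mul_le {p : ℝ → ℝ} (hp₀ : ∀ x, 0 ≤ p x) (hp₁ : ∀ x, p x ≤ 1)
    (hpC : ∀ x, 0 < x → p x ≤ C / x) (hM : 0 < M) (hMK : M ≤ 2 ^ K) (ht₀ : 0 ≤ t)
    (ht : t ≤ 1 / 2) :
    ∑ j ∈ range K, (exp (t * dyadicLevel M K (j + 1)) - exp (t * dyadicLevel M K j)) *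
        p (dyadicLevel M K j) ≤
      t * (2 * exp 1 + C * K + 2 * C * exp (t * M)) := by
  have hC : 0 ≤ C := by simpa using (hp₀ 1).trans (hpC 1 one_pos)
  obtain _ | k := K
  · simp only [range_zero, sum_empty]
    positivity
  have hstep : ∀ j ∈ range k,
      (exp (t * dyadicLevel M (k + 1) (j + 2)) - exp (t * dyadicLevel M (k + 1) (j + 1))) *
        p (dyadicLevel M (k + 1) (j + 1)) ≤
      t * C + t * C * exp (t * M) * (2 ^ (j + 2) / 2 ^ (k + 1)) := fun j hj =>
    exp_sub_exp_dyadicLevel_succ_mul_le hM ht₀ (by rw [mem_range] at hj; omega) (hp₀ _)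
      (hpC _ (by rw [dyadicLevel_of_ne_zero j.succ_ne_zero]; positivity))
  rw [sum_range_succ']
  calc _ ≤ ∑ j ∈ range k, (t * C + t * C * exp (t * M) * (2 ^ (j + 2) / 2 ^ (k + 1))) +
        2 * exp 1 * t :=
        add_le_add (sum_le_sum hstep)
          (exp_sub_exp_dyadicLevel_zero_mul_le hM hMK ht₀ ht (hp₁ _))
    _ ≤ k * (t * C) + t * C * exp (t * M) * 2 + 2 * exp 1 * t := by
        rw [sum_add_distrib, sum_const, card_range, nsmul_eq_mul, ← mul_sum]
        gcongr
        exact sum_range_two_pow_div_two_pow_le k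
    _ ≤ _ := by
        push_cast
        nlinarith [exp_pos (t * M)]

end dyadicLevel

noncomputable def truncationRemainder (C M s : ℝ) : ℝ :=
  2 * exp 1 + C * (logb 2 M + 1) + 2 * C * exp s

section Asymptotics

variable {d : ℕ → ℝ}

lemma tendsto_atTop_of_tendsto_log_div (hd : ∀ n, 0 < d n)
    (h : Tendsto (fun n : ℕ => log n / d n) atTop (𝓝 0)) : Tendsto d atTop atTop := by
  refine tendsto_atTop_mono' atTop ?_ (tendsto_log_atTop.comp tendsto_natCast_atTop_atTop)
  filter_upwards [h.eventually (eventually_le_nhds one_pos)] with n hn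
  exact (div_le_one (hd n)).1 hn

lemma tendsto_log_div_natCast_mul (hd : Tendsto d atTop atTop) :
    Tendsto (fun n : ℕ => log (d n) / (n * d n)) atTop (𝓝 0) := by
  have hlogd := isLittleO_log_id_atTop.tendsto_div_nhds_zero.comp hd
  simpa using (hlogd.mul tendsto_inv_atTop_nhds_zero_nat).congr fun n => by
    simp only [Function.comp_apply, id]; ring

lemma isLittleO_truncationRemainder (hd : ∀ n, 0 < d n)
    (h : Tendsto (fun n : ℕ => log n / d n) atTop (𝓝 0)) (C : ℝ) {δ : ℝ} (hδ₀ : 0 < δ)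
    (hδ₁ : δ < 1) :
    (fun n : ℕ => truncationRemainder C ((1 - δ) * (n * d n)) ((1 - δ ^ 2) * log (d n)))
      =o[atTop] d := by
  have hdtop := tendsto_atTop_of_tendsto_log_div hd h
  have hconst : ∀ c : ℝ, (fun _ : ℕ => c) =o[atTop] d := fun c =>
    isLittleO_const_left.2 (Or.inr (tendsto_norm_atTop_atTop.comp hdtop))
  have hlogn : (fun n : ℕ => log n) =o[atTop] d :=
    (isLittleO_iff_tendsto fun n hn => absurd hn (hd n).ne').2 h
  have hlogd : (fun n => log (d n)) =o[atTop] d := isLittleO_log_id_atTop.comp_tendsto hdtop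
  have hlogb : (fun n : ℕ => logb 2 ((1 - δ) * (n * d n))) =o[atTop] d := by
    refine ((((hconst (log (1 - δ))).add hlogn).add hlogd).const_mul_left (log 2)⁻¹).congr' ?_
      EventuallyEq.rfl
    filter_upwards [eventually_ne_atTop 0] with n hn
    rw [logb, log_mul (sub_pos.2 hδ₁).ne' (mul_ne_zero (Nat.cast_ne_zero.2 hn) (hd n).ne'),
      log_mul (Nat.cast_ne_zero.2 hn) (hd n).ne']
    ring
  have hexp : (fun n => exp ((1 - δ ^ 2) * log (d n))) =o[atTop] d := by
    refine (isLittleO_exp_comp_exp_comp.2 ?_).congr' EventuallyEq.rfl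
      (Eventually.of_forall fun n => exp_log (hd n))
    refine ((tendsto_log_atTop.comp hdtop).const_mul_atTop (pow_pos hδ₀ 2)).congr fun n => ?_
    simp only [Function.comp_apply]
    ring
  exact ((hconst _).add ((hlogb.add (hconst 1)).const_mul_left C)).add (hexp.const_mul_left _)

end Asymptotics

lemma setOf_lt_sum_subset_union {Ω : Type*} (ξ : ℕ → Ω → ℝ) (n : ℕ) (a M : ℝ) :
    {ω | a < ∑ i ∈ range n, ξ i ω} ⊆
      (⋃ i ∈ range n, {ω | M < ξ i ω}) ∪ {ω | a ≤ ∑ i ∈ range n, min (ξ i ω) M} := by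
  intro ω hω
  by_cases hbig : ∃ i ∈ range n, M < ξ i ω
  · obtain ⟨i, hi, hMi⟩ := hbig
    exact Or.inl (Set.mem_biUnion hi hMi)
  · push Not at hbig
    refine Or.inr (show a ≤ _ from le_of_lt ?_)
    rwa [sum_congr rfl fun i hi => min_eq_left (hbig i hi)]

section Truncation

variable {Ω : Type*} [MeasurableSpace Ω] {P : Measure Ω} [IsProbabilityMeasure P]

lemma integral_apply_min_le_add_sum {g : ℝ → ℝ} (hg : Monotone g) {b : ℕ → ℝ} (hb : Monotone b)
    {X : Ω → ℝ} (hX : Measurable X) (hXb : ∀ ω, b 0 ≤ X ω) (K : ℕ) :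
    ∫ ω, g (min (X ω) (b K)) ∂P ≤
      g (b 0) + ∑ j ∈ range K, (g (b (j + 1)) - g (b j)) * P.real {ω | b j < X ω} := by
  have hlevel : ∀ j, MeasurableSet {ω | b j < X ω} := fun j => hX measurableSet_Ioi
  have hint : Integrable (fun ω => g (min (X ω) (b K))) P := by
    refine .of_bound (hg.measurable.comp (hX.min measurable_const)).aestronglyMeasurable
      (|g (b 0)| + |g (b K)|) (ae_of_all _ fun ω => ?_)
    have h₀ : g (b 0) ≤ g (min (X ω) (b K)) := hg (le_min (hXb ω) (hb (Nat.zero_le K)))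
    have h₁ : g (min (X ω) (b K)) ≤ g (b K) := hg (min_le_right _ _)
    rw [Real.norm_eq_abs, abs_le]
    constructor <;> linarith [abs_nonneg (g (b 0)), abs_nonneg (g (b K)), le_abs_self (g (b K)),
      neg_abs_le (g (b 0))]
  have hterm : ∀ j ∈ range K, Integrable
      (fun ω => (g (b (j + 1)) - g (b j)) * {ω | b j < X ω}.indicator 1 ω) P :=
    fun j _ => ((integrable_const 1).indicator (hlevel j)).const_mul _
  calc ∫ ω, g (min (X ω) (b K)) ∂P
      ≤ ∫ ω, (g (b 0) + ∑ j ∈ range K,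
          (g (b (j + 1)) - g (b j)) * {ω | b j < X ω}.indicator 1 ω) ∂P :=
        integral_mono hint ((integrable_const _).add (integrable_finsetSum _ hterm))
          fun ω => hg.apply_min_le_add_sum hb (hXb ω) K
    _ = _ := by
        rw [integral_add (integrable_const _) (integrable_finsetSum _ hterm),
          integral_finsetSum _ hterm, integral_const, probReal_univ, one_smul]
        simp_rw [integral_const_mul, integral_indicator_one (hlevel _)]

lemma mgf_min_le_exp {X : Ω → ℝ} (hX : Measurable X) (hX₀ : ∀ ω, 0 ≤ X ω) {C : ℝ}
    (htail : ∀ x, 0 < x → P.real {ω | x < X ω} ≤ C / x) {t M : ℝ} (ht₀ : 0 ≤ t) (ht : t ≤ 1 / 2)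
    (hM : 1 < M) :
    mgf (fun ω => min (X ω) M) P t ≤ exp (t * truncationRemainder C M (t * M)) := by
  set K := ⌈logb 2 M⌉₊
  have hlogb : 0 < logb 2 M := logb_pos one_lt_two hM
  have hK : K ≠ 0 := (Nat.ceil_pos.2 hlogb).ne'
  have hMK : M ≤ 2 ^ K := calc
    M = 2 ^ logb 2 M := (rpow_logb two_pos (by norm_num) (by linarith)).symm
    _ ≤ 2 ^ (K : ℝ) := rpow_le_rpow_of_exponent_le one_le_two (Nat.le_ceil _)
    _ = 2 ^ K := rpow_natCast 2 K
  have hC : 0 ≤ C := by simpa using measureReal_nonneg.trans (htail 1 one_pos)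
  have hexp_mono : Monotone fun x => exp (t * x) := fun x y hxy =>
    exp_le_exp.2 (mul_le_mul_of_nonneg_left hxy ht₀)
  calc mgf (fun ω => min (X ω) M) P t
      = ∫ ω, exp (t * min (X ω) (dyadicLevel M K K)) ∂P := by rw [dyadicLevel_self hK]; rfl
    _ ≤ exp (t * dyadicLevel M K 0) + ∑ j ∈ range K,
          (exp (t * dyadicLevel M K (j + 1)) - exp (t * dyadicLevel M K j)) *
            P.real {ω | dyadicLevel M K j < X ω} :=
        integral_apply_min_le_add_sum hexp_mono (monotone_dyadicLevel (by linarith)) hX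
          (by simpa using hX₀) K
    _ ≤ 1 + t * (2 * exp 1 + C * K + 2 * C * exp (t * M)) := by
        rw [dyadicLevel_zero, mul_zero, exp_zero]
        gcongr
        exact sum_exp_dyadicLevel_mul_le (p := fun x => P.real {ω | x < X ω})
          (fun _ => measureReal_nonneg) (fun _ => measureReal_le_one) htail (by linarith) hMK
          ht₀ ht
    _ ≤ 1 + t * truncationRemainder C M (t * M) := by
        unfold truncationRemainder
        gcongr
        exact (Nat.ceil_lt_add_one hlogb.le).le
    _ ≤ _ := by linarith [add_one_le_exp (t * truncationRemainder C M (t * M))]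

lemma measureReal_lt_sum_le_add_mgf_min {ξ : ℕ → Ω → ℝ} (hmeas : ∀ i, Measurable (ξ i))
    (hindep : iIndepFun ξ P) (hident : ∀ i, P.map (ξ i) = P.map (ξ 0)) (n : ℕ) (a M : ℝ)
    {t : ℝ} (ht : 0 ≤ t) :
    P.real {ω | a < ∑ i ∈ range n, ξ i ω} ≤
      n * P.real {ω | M < ξ 0 ω} + exp (-t * a) * mgf (fun ω => min (ξ 0 ω) M) P t ^ n := by
  set Y : ℕ → Ω → ℝ := fun i ω => min (ξ i ω) M
  have hYmeas : ∀ i, Measurable (Y i) := fun i => (hmeas i).min measurable_const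
  have hidentDistrib : ∀ i, IdentDistrib (ξ i) (ξ 0) P P := fun i =>
    ⟨(hmeas i).aemeasurable, (hmeas 0).aemeasurable, hident i⟩
  have hsub : {ω | a < ∑ i ∈ range n, ξ i ω} ⊆
      (⋃ i ∈ range n, {ω | M < ξ i ω}) ∪ {ω | a ≤ (∑ i ∈ range n, Y i) ω} := by
    simpa only [Finset.sum_apply] using setOf_lt_sum_subset_union ξ n a M
  have htrunc : P.real {ω | a ≤ (∑ i ∈ range n, Y i) ω} ≤
      exp (-t * a) * mgf (fun ω => min (ξ 0 ω) M) P t ^ n := by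
    have hint : Integrable (fun ω => exp (t * (∑ i ∈ range n, Y i) ω)) P := by
      refine .of_bound (by fun_prop) (exp (t * (n * M))) (ae_of_all _ fun ω => ?_)
      rw [Real.norm_of_nonneg (exp_pos _).le, exp_le_exp, Finset.sum_apply]
      gcongr
      exact (sum_le_sum fun i _ => min_le_right (ξ i ω) M).trans_eq (by simp)
    refine (measure_ge_le_exp_mul_mgf a ht hint).trans_eq ?_
    have hYindep : iIndepFun Y P :=
      hindep.comp (fun _ x => min x M) fun _ => measurable_id.min measurable_const
    have hYident : ∀ i, mgf (Y i) P t = mgf (Y 0) P t := fun i =>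
      mgf_congr_of_identDistrib (Y i) (Y 0)
        ((hidentDistrib i).comp (measurable_id.min measurable_const)) t
    rw [hYindep.mgf_sum hYmeas, prod_congr rfl fun i _ => hYident i, prod_const, card_range]
  calc P.real {ω | a < ∑ i ∈ range n, ξ i ω}
      ≤ ∑ i ∈ range n, P.real {ω | M < ξ i ω} + P.real {ω | a ≤ (∑ i ∈ range n, Y i) ω} :=
        (measureReal_mono hsub).trans ((measureReal_union_le _ _).trans
          (add_le_add (measureReal_biUnion_finset_le _ _) le_rfl))
    _ = n * P.real {ω | M < ξ 0 ω} + P.real {ω | a ≤ (∑ i ∈ range n, Y i) ω} := by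
        have hsame : ∀ i, P.real {ω | M < ξ i ω} = P.real {ω | M < ξ 0 ω} := fun i =>
          congrArg ENNReal.toReal ((hidentDistrib i).measure_mem_eq measurableSet_Ioi)
        rw [sum_congr rfl fun i _ => hsame i, sum_const, card_range, nsmul_eq_mul]
    _ ≤ _ := by gcongr

lemma exists_measureReal_lt_le_div {X : Ω → ℝ} {c : ℝ}
    (h : ∀ᶠ x in atTop, x * P.real {ω | x < X ω} ≤ c) :
    ∃ C, ∀ x, 0 < x → P.real {ω | x < X ω} ≤ C / x := by
  obtain ⟨x₁, hx₁⟩ := eventually_atTop.1 h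
  refine ⟨max c x₁, fun x hx => ?_⟩
  rw [le_div_iff₀ hx, mul_comm]
  rcases le_total x₁ x with hx₁x | hxx₁
  · exact (hx₁ x hx₁x).trans (le_max_left _ _)
  · calc x * P.real {ω | x < X ω} ≤ x * 1 := by gcongr; exact measureReal_le_one
      _ ≤ max c x₁ := by simpa using hxx₁.trans (le_max_right _ _)

lemma mul_measureReal_lt_sum_le {ξ : ℕ → Ω → ℝ} (hmeas : ∀ i, Measurable (ξ i))
    (hnonneg : ∀ i ω, 0 ≤ ξ i ω) (hindep : iIndepFun ξ P)
    (hident : ∀ i, P.map (ξ i) = P.map (ξ 0)) {C : ℝ}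
    (hC : ∀ x, 0 < x → P.real {ω | x < ξ 0 ω} ≤ C / x) {n : ℕ} {D δ : ℝ} (hn : n ≠ 0)
    (hD : 1 ≤ D) (hδ₀ : 0 ≤ δ) (hδ₁ : δ < 1) (ht : (1 + δ) * log D / (n * D) ≤ 1 / 2)
    (hM : 1 < (1 - δ) * (n * D)) :
    D * P.real {ω | n * D < ∑ i ∈ range n, ξ i ω} ≤
      (1 - δ) * (n * D) * P.real {ω | (1 - δ) * (n * D) < ξ 0 ω} / (1 - δ) +
        exp (-(log D * (δ - (1 + δ) *
          (truncationRemainder C ((1 - δ) * (n * D)) ((1 - δ ^ 2) * log D) / D)))) := by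
  set a := (n : ℝ) * D
  set M := (1 - δ) * a
  set t := (1 + δ) * log D / a
  set R := truncationRemainder C M ((1 - δ ^ 2) * log D)
  have hD₀ : 0 < D := by linarith
  have ha : 0 < a := by positivity
  have ht₀ : 0 ≤ t := by
    have := log_nonneg hD
    positivity
  have htM : t * M = (1 - δ ^ 2) * log D := by
    simp only [t, M]; field_simp; ring
  have hmgf := mgf_min_le_exp (hmeas 0) (hnonneg 0) hC ht₀ ht hM
  rw [htM] at hmgf
  calc D * P.real {ω | n * D < ∑ i ∈ range n, ξ i ω}
      ≤ D * (n * P.real {ω | M < ξ 0 ω} +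
          exp (-t * a) * mgf (fun ω => min (ξ 0 ω) M) P t ^ n) :=
        mul_le_mul_of_nonneg_left (measureReal_lt_sum_le_add_mgf_min hmeas hindep hident n a M ht₀)
          hD₀.le
    _ ≤ D * (n * P.real {ω | M < ξ 0 ω} + exp (-t * a) * exp (t * R) ^ n) := by
        gcongr
        exact mgf_nonneg
    _ = M * P.real {ω | M < ξ 0 ω} / (1 - δ) + exp (log D + -t * a + n * (t * R)) := by
        rw [exp_add, exp_add, exp_log hD₀, exp_nat_mul]
        have : 1 - δ ≠ 0 := (sub_pos.2 hδ₁).ne'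
        simp only [M, a]
        field_simp
    _ = _ := by
        congr 2
        simp only [t, a]
        field_simp
        ring

lemma limsup_mul_measureReal_lt_sum_le_inv_one_sub {ξ : ℕ → Ω → ℝ}
    (hmeas : ∀ i, Measurable (ξ i)) (hnonneg : ∀ i ω, 0 ≤ ξ i ω) (hindep : iIndepFun ξ P)
    (hident : ∀ i, P.map (ξ i) = P.map (ξ 0))
    (htail : Tendsto (fun x : ℝ => x * P.real {ω | x < ξ 0 ω}) atTop (𝓝 1))
    {d : ℕ → ℝ} (hd : ∀ n, 0 < d n) (hdlog : Tendsto (fun n : ℕ => log n / d n) atTop (𝓝 0))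
    {δ : ℝ} (hδ₀ : 0 < δ) (hδ₁ : δ < 1) :
    limsup (fun n : ℕ => d n * P.real {ω | n * d n < ∑ i ∈ range n, ξ i ω}) atTop ≤
      (1 - δ)⁻¹ := by
  obtain ⟨C, hC⟩ := exists_measureReal_lt_le_div (htail.eventually (eventually_le_nhds one_lt_two))
  have hdtop := tendsto_atTop_of_tendsto_log_div hd hdlog
  set M : ℕ → ℝ := fun n => (1 - δ) * (n * d n)
  set R : ℕ → ℝ := fun n => truncationRemainder C (M n) ((1 - δ ^ 2) * log (d n))
  have hMtop : Tendsto M atTop atTop :=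
    (tendsto_natCast_atTop_atTop.atTop_mul_atTop₀ hdtop).const_mul_atTop (sub_pos.2 hδ₁)
  have ht : Tendsto (fun n : ℕ => (1 + δ) * log (d n) / (n * d n)) atTop (𝓝 0) := by
    simpa [mul_div_assoc] using (tendsto_log_div_natCast_mul hdtop).const_mul (1 + δ)
  have hfirst : Tendsto (fun n => M n * P.real {ω | M n < ξ 0 ω} / (1 - δ)) atTop
      (𝓝 (1 - δ)⁻¹) := by
    simpa using (htail.comp hMtop).div_const (1 - δ)
  have hsecond : Tendsto (fun n => exp (-(log (d n) * (δ - (1 + δ) * (R n / d n))))) atTop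
      (𝓝 0) := by
    have hR := (isLittleO_truncationRemainder hd hdlog C hδ₀ hδ₁).tendsto_div_nhds_zero
    have hgap : Tendsto (fun n => δ - (1 + δ) * (R n / d n)) atTop (𝓝 δ) := by
      simpa using (hR.const_mul (1 + δ)).const_sub δ
    exact tendsto_exp_atBot.comp (tendsto_neg_atTop_atBot.comp
      ((tendsto_log_atTop.comp hdtop).atTop_mul_pos hδ₀ hgap))
  have hbound : ∀ᶠ n in atTop, d n * P.real {ω | n * d n < ∑ i ∈ range n, ξ i ω} ≤
      M n * P.real {ω | M n < ξ 0 ω} / (1 - δ) +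
        exp (-(log (d n) * (δ - (1 + δ) * (R n / d n)))) := by
    filter_upwards [eventually_ne_atTop 0, hdtop.eventually_ge_atTop 1,
      ht.eventually (eventually_le_nhds one_half_pos), hMtop.eventually_gt_atTop 1]
      with n hn hd₁ ht hM
    exact mul_measureReal_lt_sum_le hmeas hnonneg hindep hident hC hn hd₁ hδ₀.le hδ₁ ht hM
  calc limsup (fun n : ℕ => d n * P.real {ω | n * d n < ∑ i ∈ range n, ξ i ω}) atTop
      ≤ limsup (fun n => M n * P.real {ω | M n < ξ 0 ω} / (1 - δ) +
          exp (-(log (d n) * (δ - (1 + δ) * (R n / d n))))) atTop :=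
        limsup_le_limsup hbound
          (isCoboundedUnder_le_of_le atTop fun n => mul_nonneg (hd n).le measureReal_nonneg)
          (hfirst.add hsecond).isBoundedUnder_le
    _ = (1 - δ)⁻¹ := by simpa using (hfirst.add hsecond).limsup_eq

end Truncation

/-- For i.i.d. nonnegative `ξ₁, ξ₂, …` with tail `x · P(ξ > x) → 1`
(the case `γ = 1`), and any positive sequence `d_n` with `(log n)/d_n → 0`, one has
`limsup_n d_n · P(S_n > n d_n) ≤ 1`. -/
theorem statement2 {Ω : Type*} [MeasurableSpace Ω] (P : Measure Ω) [IsProbabilityMeasure P]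
    (ξ : ℕ → Ω → ℝ) (hmeas : ∀ n, Measurable (ξ n))
    (hnonneg : ∀ n ω, 0 ≤ ξ n ω)
    (hindep : ProbabilityTheory.iIndepFun ξ P)
    (hident : ∀ n, P.map (ξ n) = P.map (ξ 0))
    (htail : Tendsto (fun x : ℝ => x * (P {ω | x < ξ 0 ω}).toReal) atTop (nhds 1))
    (d : ℕ → ℝ) (hdpos : ∀ n, 0 < d n)
    (hdlog : Tendsto (fun n : ℕ => Real.log n / d n) atTop (nhds 0)) :
    limsup (fun n : ℕ =>
        d n * (P {ω | (n : ℝ) * d n < ∑ l ∈ Finset.range n, ξ l ω}).toReal) atTop ≤ 1 := by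
  have hlim : Tendsto (fun δ : ℝ => (1 - δ)⁻¹) (𝓝[>] 0) (𝓝 1) := by
    have h := (tendsto_const_nhds (x := (1 : ℝ)) |>.sub (tendsto_id (x := 𝓝 (0 : ℝ)))).inv₀
      (by norm_num)
    simpa using h.mono_left nhdsWithin_le_nhds
  refine ge_of_tendsto hlim ?_
  filter_upwards [Ioo_mem_nhdsGT one_pos] with δ hδ
  exact limsup_mul_measureReal_lt_sum_le_inv_one_sub hmeas hnonneg hindep hident htail hdpos hdlog
    hδ.1 hδ.2
end

section
/- There exists a constant c_γ > 0 (one may take c_γ = (10 − 8γ)·(2 − 2γ)^{1/(1−γ)}) such that for every sequence (c_n) of positive reals with c_n → 0 and n^{1/γ − 1} c_n → ∞, one has P(S_n ≤ c_n n^{1/γ}) ≤ 2 · exp(− c_n^{−γ/(1−γ)} / c_γ) for all sufficiently large n. -/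
/-!
Chernoff's bound at a negative exponent `-λ` gives
`P(S_n ≤ a) ≤ exp(λ a) · E[exp(-λ ξ)]^n ≤ exp(λ a - n P(ξ > 1/λ) / 2)`, and the tail
asymptotics give `P(ξ > 1/λ) ≥ λ^γ / 2` once `λ` is small. Taking `λ = s n^(-1/γ)` makes the
exponent `s c - s^γ / 4`, independent of `n`; the choice `s = (8 c)^(-1/(1-γ))` turns it into
`-c^(-γ/(1-γ)) / 8^(1/(1-γ))`. The growth of `n^(1/γ-1) c_n` is exactly what makes `λ_n → 0`.
-/

open MeasureTheory Filter ProbabilityTheory Real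

lemma exp_neg_mul_le_one_sub_indicator {x lam : ℝ} (hlam : 0 < lam) (hx : 0 ≤ x) :
    exp (-lam * x) ≤ 1 - Set.indicator {y | lam⁻¹ < y} (fun _ => (1 / 2 : ℝ)) x := by
  by_cases hlarge : lam⁻¹ < x
  · rw [Set.indicator_of_mem (show x ∈ {y | lam⁻¹ < y} from hlarge)]
    have h1 : -lam * x ≤ -1 := by
      have := mul_lt_mul_of_pos_left hlarge hlam
      rw [mul_inv_cancel₀ hlam.ne'] at this
      linarith
    calc exp (-lam * x) ≤ exp (-1) := exp_le_exp.mpr h1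
      _ ≤ 1 / 2 := by
        rw [exp_neg, inv_le_comm₀ (exp_pos 1) (by norm_num)]
        linarith [add_one_le_exp (1 : ℝ)]
      _ = _ := by norm_num
  · rw [Set.indicator_of_notMem (show x ∉ {y | lam⁻¹ < y} from hlarge), sub_zero,
      exp_le_one_iff]
    exact mul_nonpos_of_nonpos_of_nonneg (neg_nonpos.mpr hlam.le) hx

lemma eventually_rpow_neg_div_two_le {γ : ℝ} {g : ℝ → ℝ}
    (hg : Tendsto (fun x => x ^ γ * g x) atTop (nhds 1)) :
    ∀ᶠ x in atTop, x ^ (-γ) / 2 ≤ g x := by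
  filter_upwards [hg.eventually (eventually_ge_nhds one_half_lt_one), eventually_gt_atTop 0]
    with x hx hx0
  calc x ^ (-γ) / 2 ≤ x ^ (-γ) * (x ^ γ * g x) := by
        rw [div_eq_mul_one_div]; gcongr
    _ = g x := by rw [← mul_assoc, ← rpow_add hx0, neg_add_cancel, rpow_zero, one_mul]

lemma mul_sub_rpow_div_four_eq_neg {γ c : ℝ} (hγ1 : γ ≠ 1) (hc : 0 < c) :
    (8 * c) ^ (-(1 / (1 - γ))) * c - ((8 * c) ^ (-(1 / (1 - γ)))) ^ γ / 4 =
      -(c ^ (-(γ / (1 - γ))) / 8 ^ (1 / (1 - γ))) := by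
  have h1γ : 1 - γ ≠ 0 := sub_ne_zero.mpr hγ1.symm
  have h8c : 0 < 8 * c := by positivity
  set u := (8 * c) ^ (-(1 / (1 - γ))) with hu
  have huγ : u ^ γ = 8 * c * u := by
    have he : -(1 / (1 - γ)) * γ = 1 + -(1 / (1 - γ)) := by field_simp; ring
    rw [hu, ← rpow_mul h8c.le, he, rpow_add h8c, rpow_one]
  have hc8 : c ^ (-(γ / (1 - γ))) / 8 ^ (1 / (1 - γ)) = c * u := by
    have he : -(γ / (1 - γ)) = 1 + -(1 / (1 - γ)) := by field_simp; ring
    rw [hu, mul_rpow (by norm_num) hc.le, rpow_neg (by norm_num : (0 : ℝ) ≤ 8), he,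
      rpow_add hc, rpow_one, div_eq_mul_inv]
    ring
  rw [huγ, hc8]
  ring

lemma mul_rpow_neg_mul_mul_rpow {x : ℝ} (hx : 0 < x) (a s c : ℝ) :
    s * x ^ (-a) * (c * x ^ a) = s * c := by
  rw [rpow_neg hx.le]
  field_simp [(rpow_pos_of_pos hx a).ne']

lemma mul_mul_rpow_neg_inv_rpow {γ x s : ℝ} (hγ : γ ≠ 0) (hx : 0 < x) (hs : 0 ≤ s) :
    x * (s * x ^ (-(1 / γ))) ^ γ = s ^ γ := by
  rw [mul_rpow hs (rpow_nonneg hx.le _), ← rpow_mul hx.le, neg_mul, one_div_mul_cancel hγ,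
    rpow_neg_one]
  field_simp

lemma inv_mul_rpow_neg_inv_eq {γ x a c : ℝ} (hγ : γ ≠ 0) (hγ1 : γ ≠ 1) (hx : 0 < x)
    (ha : 0 < a) (hc : 0 < c) :
    ((a * c) ^ (-(1 / (1 - γ))) * x ^ (-(1 / γ)))⁻¹ =
      a ^ (1 / (1 - γ)) * (x ^ (1 / γ - 1) * c) ^ (1 / (1 - γ)) := by
  have h1γ : 1 - γ ≠ 0 := sub_ne_zero.mpr hγ1.symm
  have he : (1 / γ - 1) * (1 / (1 - γ)) = 1 / γ := by field_simp
  rw [mul_inv, rpow_neg (by positivity), rpow_neg hx.le, inv_inv, inv_inv,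
    mul_rpow (rpow_nonneg hx.le _) hc.le, ← rpow_mul hx.le, he, mul_rpow ha.le hc.le]
  ring

namespace ProbabilityTheory

variable {Ω : Type*} [MeasurableSpace Ω] {P : Measure Ω} [IsProbabilityMeasure P]

lemma mgf_neg_le_exp_neg_tail {X : Ω → ℝ} (hX : Measurable X) (hX0 : ∀ ω, 0 ≤ X ω)
    {lam : ℝ} (hlam : 0 < lam) :
    mgf X P (-lam) ≤ exp (-(P.real {ω | lam⁻¹ < X ω} / 2)) := by
  have hA : MeasurableSet {ω | lam⁻¹ < X ω} := measurableSet_lt measurable_const hX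
  have hint : Integrable (fun ω => exp (-lam * X ω)) P := by
    refine (integrable_const 1).mono' (hX.const_mul _).exp.aestronglyMeasurable
      (Eventually.of_forall fun ω => ?_)
    rw [norm_of_nonneg (exp_pos _).le, exp_le_one_iff]
    exact mul_nonpos_of_nonpos_of_nonneg (neg_nonpos.mpr hlam.le) (hX0 ω)
  have hint' :
      Integrable (fun ω => 1 - {ω | lam⁻¹ < X ω}.indicator (fun _ => (1 / 2 : ℝ)) ω) P :=
    (integrable_const 1).sub ((integrable_const _).indicator hA)
  calc mgf X P (-lam)
      ≤ ∫ ω, (1 - {ω | lam⁻¹ < X ω}.indicator (fun _ => (1 / 2 : ℝ)) ω) ∂P :=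
        integral_mono hint hint' fun ω => exp_neg_mul_le_one_sub_indicator hlam (hX0 ω)
    _ = 1 - P.real {ω | lam⁻¹ < X ω} / 2 := by
        rw [integral_sub (integrable_const 1) ((integrable_const _).indicator hA),
          integral_indicator_const _ hA]
        simp only [integral_const, probReal_univ, smul_eq_mul]
        ring
    _ ≤ _ := by linarith [add_one_le_exp (-(P.real {ω | lam⁻¹ < X ω} / 2))]

lemma measureReal_sum_le_le_exp_tail {ξ : ℕ → Ω → ℝ} (hmeas : ∀ n, Measurable (ξ n))
    (hnonneg : ∀ n ω, 0 ≤ ξ n ω) (hindep : iIndepFun ξ P)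
    (hident : ∀ n, P.map (ξ n) = P.map (ξ 0)) {lam : ℝ} (hlam : 0 < lam) (a : ℝ) (n : ℕ) :
    P.real {ω | ∑ l ∈ Finset.range n, ξ l ω ≤ a} ≤
      exp (lam * a - n * (P.real {ω | lam⁻¹ < ξ 0 ω} / 2)) := by
  have hint : Integrable (fun ω => exp (-lam * (∑ l ∈ Finset.range n, ξ l) ω)) P := by
    refine (integrable_const 1).mono' (Measurable.aestronglyMeasurable (by fun_prop))
      (Eventually.of_forall fun ω => ?_)
    rw [norm_of_nonneg (exp_pos _).le, exp_le_one_iff, Finset.sum_apply]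
    exact mul_nonpos_of_nonpos_of_nonneg (neg_nonpos.mpr hlam.le)
      (Finset.sum_nonneg fun l _ => hnonneg l ω)
  have hmgf : mgf (∑ l ∈ Finset.range n, ξ l) P (-lam) = mgf (ξ 0) P (-lam) ^ n := by
    rw [hindep.mgf_sum hmeas, Finset.prod_eq_pow_card fun i _ => congrFun
      (mgf_congr_identDistrib ⟨(hmeas i).aemeasurable, (hmeas 0).aemeasurable, hident i⟩) _,
      Finset.card_range]
  calc P.real {ω | ∑ l ∈ Finset.range n, ξ l ω ≤ a}
      ≤ exp (-(-lam) * a) * mgf (∑ l ∈ Finset.range n, ξ l) P (-lam) := by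
        simpa only [Finset.sum_apply] using
          measure_le_le_exp_mul_mgf a (neg_nonpos.mpr hlam.le) hint
    _ ≤ exp (lam * a) * exp (-(P.real {ω | lam⁻¹ < ξ 0 ω} / 2)) ^ n := by
        rw [hmgf, neg_neg]
        gcongr
        · exact mgf_nonneg
        · exact mgf_neg_le_exp_neg_tail (hmeas 0) (hnonneg 0) hlam
    _ = _ := by rw [← exp_nat_mul, ← exp_add]; ring_nf

end ProbabilityTheory

/-- For i.i.d. nonnegative `ξ₁, ξ₂, …` with tail `x^γ · P(ξ > x) → 1`,
`γ ∈ (0,1)`, there is a constant `c_γ > 0` such that for every positive sequence `c_n`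
with `c_n → 0` and `n^{1/γ-1} c_n → ∞`, for all sufficiently large `n`,
`P(S_n ≤ c_n n^{1/γ}) ≤ 2 exp(− c_n^{−γ/(1−γ)} / c_γ)`. -/
theorem statement3 {Ω : Type*} [MeasurableSpace Ω] (P : Measure Ω) [IsProbabilityMeasure P]
    (γ : ℝ) (hγ : γ ∈ Set.Ioo (0 : ℝ) 1)
    (ξ : ℕ → Ω → ℝ) (hmeas : ∀ n, Measurable (ξ n))
    (hnonneg : ∀ n ω, 0 ≤ ξ n ω)
    (hindep : ProbabilityTheory.iIndepFun ξ P)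
    (hident : ∀ n, P.map (ξ n) = P.map (ξ 0))
    (htail : Tendsto (fun x : ℝ => x ^ γ * (P {ω | x < ξ 0 ω}).toReal) atTop (nhds 1)) :
    ∃ cγ > (0 : ℝ), ∀ c : ℕ → ℝ, (∀ n, 0 < c n) →
      Tendsto c atTop (nhds 0) →
      Tendsto (fun n : ℕ => (n : ℝ) ^ (1 / γ - 1) * c n) atTop atTop →
      ∀ᶠ n : ℕ in atTop,
        (P {ω | ∑ l ∈ Finset.range n, ξ l ω ≤ c n * (n : ℝ) ^ (1 / γ)}).toReal ≤
          2 * Real.exp (-((c n) ^ (-(γ / (1 - γ))) / cγ)) := by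
  obtain ⟨hγ0, hγ1⟩ := hγ
  have h1γ : 0 < 1 - γ := sub_pos.mpr hγ1
  refine ⟨8 ^ (1 / (1 - γ)), by positivity, fun c hc _ hblow => ?_⟩
  set s : ℕ → ℝ := fun n => (8 * c n) ^ (-(1 / (1 - γ)))
  set lam : ℕ → ℝ := fun n => s n * (n : ℝ) ^ (-(1 / γ))
  have hs : ∀ n, 0 < s n := fun n => rpow_pos_of_pos (by linarith [hc n]) _
  have hlam_inv : Tendsto (fun n => (lam n)⁻¹) atTop atTop := by
    refine (((tendsto_rpow_atTop (one_div_pos.mpr h1γ)).comp hblow).const_mul_atTop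
      (by positivity : (0 : ℝ) < 8 ^ (1 / (1 - γ)))).congr' ?_
    filter_upwards [eventually_gt_atTop 0] with n hn
    exact (inv_mul_rpow_neg_inv_eq hγ0.ne' hγ1.ne (Nat.cast_pos.mpr hn)
      (by norm_num : (0 : ℝ) < 8) (hc n)).symm
  filter_upwards [hlam_inv.eventually (eventually_rpow_neg_div_two_le htail),
    eventually_gt_atTop 0] with n hn_tail hn
  have hn' : (0 : ℝ) < n := Nat.cast_pos.mpr hn
  have hlam : 0 < lam n := mul_pos (hs n) (rpow_pos_of_pos hn' _)
  rw [inv_rpow hlam.le, rpow_neg hlam.le, inv_inv, ← measureReal_def] at hn_tail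
  have hlam_mul : lam n * (c n * (n : ℝ) ^ (1 / γ)) = s n * c n :=
    mul_rpow_neg_mul_mul_rpow hn' _ _ _
  have hlam_rpow : n * lam n ^ γ = s n ^ γ := mul_mul_rpow_neg_inv_rpow hγ0.ne' hn' (hs n).le
  calc (P {ω | ∑ l ∈ Finset.range n, ξ l ω ≤ c n * (n : ℝ) ^ (1 / γ)}).toReal
      ≤ exp (lam n * (c n * (n : ℝ) ^ (1 / γ))
          - n * (P.real {ω | (lam n)⁻¹ < ξ 0 ω} / 2)) :=
        measureReal_sum_le_le_exp_tail hmeas hnonneg hindep hident hlam _ n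
    _ ≤ exp (s n * c n - s n ^ γ / 4) := by
        rw [exp_le_exp]
        linarith [mul_le_mul_of_nonneg_left hn_tail hn'.le]
    _ = exp (-(c n ^ (-(γ / (1 - γ))) / 8 ^ (1 / (1 - γ)))) := by
        rw [mul_sub_rpow_div_four_eq_neg hγ1.ne (hc n)]
    _ ≤ 2 * exp (-(c n ^ (-(γ / (1 - γ))) / 8 ^ (1 / (1 - γ)))) :=
        le_mul_of_one_le_left (exp_pos _).le one_le_two
end

section
/- Let (c_n) be a sequence of positive reals such that sup_n n^{1/γ − 1} c_n < L for some constant L > 0. Then there exists a constant c > 0 such that P(S_n ≤ c_n n^{1/γ}) ≤ exp(−c·n) for all sufficiently large n. -/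
/-!
The threshold `c' n * n ^ (1 / γ)` is at most `L n`, so it suffices to bound `P(Sₙ ≤ L n)`.
Since `γ ≤ 1`, `x P(ξ > x) ≥ 1/2` for all large `x`, so every dyadic block `(a 2ᵏ, a 2ᵏ⁺¹]`
contributes at least `1/4` to the truncated mean: `E[min(ξ, M)] ≥ 4L` for `M = a 2ᴷ`, `K ≥ 16L`
(the mean of `ξ` is infinite). As `e^{-y} ≤ 1 - y/2` on `[0, 1]`, this gives
`E[e^{-ξ/M}] ≤ 1 - E[min(ξ, M)]/(2M) ≤ e^{-2L/M}`, and the Chernoff bound yields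
`P(Sₙ ≤ L n) ≤ e^{Ln/M} e^{-2Ln/M} = e^{-Ln/M}`.
-/

open MeasureTheory Filter Real ProbabilityTheory Finset Topology

lemma exp_neg_le_one_sub_half {x : ℝ} (h0 : 0 ≤ x) (h1 : x ≤ 1) : exp (-x) ≤ 1 - x / 2 := by
  have h : exp (-x) ≤ (1 + x)⁻¹ := by
    rw [exp_neg]
    exact inv_anti₀ (by linarith) (by linarith [add_one_le_exp x])
  refine h.trans ?_
  rw [inv_le_iff_one_le_mul₀ (by linarith)]
  nlinarith

lemma eventually_le_mul_of_tendsto_rpow_mul {f : ℝ → ℝ} (hf : ∀ x, 0 ≤ f x) {γ ℓ c : ℝ}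
    (hγ : γ ≤ 1) (h : Tendsto (fun x => x ^ γ * f x) atTop (𝓝 ℓ)) (hc : c < ℓ) :
    ∀ᶠ x in atTop, c ≤ x * f x := by
  filter_upwards [h.eventually (eventually_ge_nhds hc), eventually_ge_atTop 1] with x hx hx1
  calc c ≤ x ^ γ * f x := hx
    _ ≤ x * f x := by
      gcongr
      · exact hf x
      · simpa using rpow_le_rpow_of_exponent_le hx1 hγ

lemma sum_ite_le_min_two_pow {a y : ℝ} (ha : 0 ≤ a) (hy : 0 ≤ y) (K : ℕ) :
    ∑ k ∈ range K, (if a * 2 ^ (k + 1) < y then a * 2 ^ k else 0) ≤ min y (a * 2 ^ K) := by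
  induction K with
  | zero => simpa using le_min hy ha
  | succ K ih =>
    rw [sum_range_succ]
    split_ifs with h
    · rw [min_eq_right h.le, pow_succ]
      linarith [min_le_right y (a * 2 ^ K)]
    · have : a * 2 ^ K ≤ a * 2 ^ (K + 1) := by gcongr; norm_num; omega
      linarith [min_le_min_left y this]

section

variable {Ω : Type*} [MeasurableSpace Ω] {μ : Measure Ω} {X : Ω → ℝ}

lemma integrable_min_const [IsFiniteMeasure μ] (hX : Measurable X) (h0 : ∀ ω, 0 ≤ X ω)
    {M : ℝ} (hM : 0 ≤ M) : Integrable (fun ω => min (X ω) M) μ :=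
  (integrable_const M).mono' (hX.min measurable_const).aestronglyMeasurable
    (ae_of_all _ fun ω => by simp [abs_of_nonneg (le_min (h0 ω) hM)])

lemma le_integral_min_two_pow [IsFiniteMeasure μ] (hX : Measurable X) (h0 : ∀ ω, 0 ≤ X ω)
    {a c : ℝ} (ha : 0 ≤ a) (htail : ∀ x ≥ a, c ≤ x * μ.real {ω | x < X ω}) (K : ℕ) :
    K * c / 2 ≤ ∫ ω, min (X ω) (a * 2 ^ K) ∂μ := by
  set A : ℕ → Set Ω := fun k => {ω | a * 2 ^ (k + 1) < X ω}
  have hA : ∀ k, MeasurableSet (A k) := fun k => measurableSet_lt measurable_const hX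
  have hstep : ∀ k, c / 2 ≤ μ.real (A k) * (a * 2 ^ k) := by
    intro k
    have := htail (a * 2 ^ (k + 1)) (le_mul_of_one_le_right ha (one_le_pow₀ one_le_two))
    calc c / 2 ≤ a * 2 ^ (k + 1) * μ.real (A k) / 2 := by linarith
      _ = μ.real (A k) * (a * 2 ^ k) := by ring
  calc (K : ℝ) * c / 2 = ∑ _k ∈ range K, c / 2 := by rw [sum_const, card_range, nsmul_eq_mul]; ring
    _ ≤ ∑ k ∈ range K, μ.real (A k) * (a * 2 ^ k) := sum_le_sum fun k _ => hstep k
    _ = ∫ ω, ∑ k ∈ range K, (A k).indicator (fun _ => a * 2 ^ k) ω ∂μ := by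
      rw [integral_finsetSum _ fun k _ => (integrable_const _).indicator (hA k)]
      simp only [integral_indicator_const _ (hA _), smul_eq_mul]
    _ ≤ ∫ ω, min (X ω) (a * 2 ^ K) ∂μ := by
      refine integral_mono (integrable_finsetSum _ fun k _ => (integrable_const _).indicator (hA k))
        (integrable_min_const hX h0 (by positivity)) fun ω => ?_
      simpa [A, Set.indicator_apply] using sum_ite_le_min_two_pow ha (h0 ω) K

lemma mgf_neg_inv_le [IsProbabilityMeasure μ] (hX : Measurable X) (h0 : ∀ ω, 0 ≤ X ω)
    {M : ℝ} (hM : 0 < M) : mgf X μ (-M⁻¹) ≤ 1 - (∫ ω, min (X ω) M ∂μ) / (2 * M) := by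
  have hpt : ∀ ω, exp (-M⁻¹ * X ω) ≤ 1 - M⁻¹ * min (X ω) M / 2 := by
    intro ω
    calc exp (-M⁻¹ * X ω) ≤ exp (-(M⁻¹ * min (X ω) M)) := by
          gcongr; rw [neg_mul, neg_le_neg_iff]; gcongr; exact min_le_left _ _
      _ ≤ 1 - M⁻¹ * min (X ω) M / 2 := by
          refine exp_neg_le_one_sub_half (by positivity [le_min (h0 ω) hM.le]) ?_
          rw [inv_mul_le_one₀ hM]; exact min_le_right _ _
  have hint : Integrable (fun ω => exp (-M⁻¹ * X ω)) μ :=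
    (integrable_const 1).mono' (hX.const_mul _).exp.aestronglyMeasurable
      (ae_of_all _ fun ω => by
        rw [norm_of_nonneg (exp_pos _).le, exp_le_one_iff]
        nlinarith [h0 ω, inv_pos.2 hM])
  have hmin := integrable_min_const (μ := μ) hX h0 hM.le
  calc mgf X μ (-M⁻¹) ≤ ∫ ω, (1 - M⁻¹ * min (X ω) M / 2) ∂μ :=
        integral_mono hint ((integrable_const 1).sub ((hmin.const_mul _).div_const 2)) hpt
    _ = 1 - (∫ ω, min (X ω) M ∂μ) / (2 * M) := by
      rw [integral_sub (integrable_const 1) ((hmin.const_mul _).div_const 2), integral_div,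
        integral_const_mul]
      simp only [integral_const, probReal_univ, smul_eq_mul, mul_one, sub_right_inj]
      field_simp

lemma measureReal_sum_le_le_exp [IsProbabilityMeasure μ] {ξ : ℕ → Ω → ℝ}
    (hmeas : ∀ i, Measurable (ξ i)) (h0 : ∀ i ω, 0 ≤ ξ i ω) (hindep : iIndepFun ξ μ)
    (hident : ∀ i, IdentDistrib (ξ i) (ξ 0) μ μ) {M : ℝ} (hM : 0 < M) {n : ℕ} (hn : n ≠ 0)
    (b : ℝ) :
    μ.real {ω | ∑ i ∈ range n, ξ i ω ≤ b} ≤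
      exp ((b - n * (∫ ω, min (ξ 0 ω) M ∂μ) / 2) / M) := by
  set I := ∫ ω, min (ξ 0 ω) M ∂μ
  have hS : Measurable (∑ i ∈ range n, ξ i) := by fun_prop
  have hint : Integrable (fun ω => exp (-M⁻¹ * (∑ i ∈ range n, ξ i) ω)) μ :=
    (integrable_const 1).mono' (hS.const_mul _).exp.aestronglyMeasurable
      (ae_of_all _ fun ω => by
        rw [norm_of_nonneg (exp_pos _).le, exp_le_one_iff, Finset.sum_apply]
        nlinarith [sum_nonneg fun i (_ : i ∈ range n) => h0 i ω, inv_pos.2 hM])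
  have hmgf : mgf (∑ i ∈ range n, ξ i) μ (-M⁻¹) = mgf (ξ 0) μ (-M⁻¹) ^ n := by
    simpa using mgf_sum_of_identDistrib hmeas hindep
      (fun i _ j _ => (hident i).trans (hident j).symm) (mem_range.2 (Nat.pos_of_ne_zero hn)) _
  have hmgf0 : mgf (ξ 0) μ (-M⁻¹) ≤ exp (-(I / (2 * M))) :=
    (mgf_neg_inv_le (hmeas 0) (h0 0) hM).trans (by linarith [add_one_le_exp (-(I / (2 * M)))])
  calc μ.real {ω | ∑ i ∈ range n, ξ i ω ≤ b}
      ≤ exp (-(-M⁻¹) * b) * mgf (∑ i ∈ range n, ξ i) μ (-M⁻¹) := by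
        simpa [Finset.sum_apply] using
          measure_le_le_exp_mul_mgf b (by simpa using hM.le) hint
    _ ≤ exp (-(-M⁻¹) * b) * exp (-(I / (2 * M))) ^ n := by
        rw [hmgf]; gcongr; exact mgf_nonneg
    _ = exp ((b - n * I / 2) / M) := by
        rw [← exp_nat_mul, ← exp_add]; congr 1; field_simp; ring

end

theorem statement4_general {Ω : Type*} [MeasurableSpace Ω] (P : Measure Ω) [IsProbabilityMeasure P]
    (γ : ℝ) (hγ : γ ∈ Set.Ioc (0 : ℝ) 1)
    (ξ : ℕ → Ω → ℝ) (hmeas : ∀ n, Measurable (ξ n))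
    (hnonneg : ∀ n ω, 0 ≤ ξ n ω)
    (hindep : ProbabilityTheory.iIndepFun ξ P)
    (hident : ∀ n, P.map (ξ n) = P.map (ξ 0))
    (htail : Tendsto (fun x : ℝ => x ^ γ * (P {ω | x < ξ 0 ω}).toReal) atTop (nhds 1))
    (c' : ℕ → ℝ)
    (L : ℝ) (hL : 0 < L) (hsup : ∀ n : ℕ, (n : ℝ) ^ (1 / γ - 1) * c' n < L) :
    ∃ c > (0 : ℝ), ∀ᶠ n : ℕ in atTop,
      (P {ω | ∑ l ∈ Finset.range n, ξ l ω ≤ c' n * (n : ℝ) ^ (1 / γ)}).toReal ≤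
        Real.exp (-(c * n)) := by
  obtain ⟨a, ha⟩ := ((eventually_le_mul_of_tendsto_rpow_mul (fun _ => measureReal_nonneg) hγ.2
    htail one_half_lt_one).and (eventually_gt_atTop 0)).exists_forall_of_atTop
  have ha0 : 0 < a := (ha a le_rfl).2
  set M := a * 2 ^ ⌈16 * L⌉₊
  have hM : 0 < M := by positivity
  have hI : 4 * L ≤ ∫ ω, min (ξ 0 ω) M ∂P := by
    refine le_trans ?_ (le_integral_min_two_pow (hmeas 0) (hnonneg 0) ha0.le
      (fun x hx => (ha x hx).1) _)
    nlinarith [Nat.le_ceil (16 * L)]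
  refine ⟨L / M, by positivity, ?_⟩
  filter_upwards [eventually_ne_atTop 0] with n hn
  have hn0 : (0 : ℝ) < n := by positivity
  have hthreshold : c' n * (n : ℝ) ^ (1 / γ) ≤ L * n := by
    calc c' n * (n : ℝ) ^ (1 / γ) = ((n : ℝ) ^ (1 / γ - 1) * c' n) * n := by
          rw [rpow_sub_one hn0.ne']; field_simp
      _ ≤ L * n := by gcongr; exact (hsup n).le
  calc P.real {ω | ∑ l ∈ range n, ξ l ω ≤ c' n * (n : ℝ) ^ (1 / γ)}
      ≤ P.real {ω | ∑ l ∈ range n, ξ l ω ≤ L * n} :=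
        measureReal_mono fun ω hω => le_trans hω hthreshold
    _ ≤ exp ((L * n - n * (∫ ω, min (ξ 0 ω) M ∂P) / 2) / M) :=
        measureReal_sum_le_le_exp hmeas hnonneg hindep
          (fun i => ⟨(hmeas i).aemeasurable, (hmeas 0).aemeasurable, hident i⟩) hM hn _
    _ ≤ exp (-(L * n) / M) := by gcongr; nlinarith
    _ = exp (-(L / M * n)) := by ring_nf

/-- For i.i.d. nonnegative `ξ₁, ξ₂, …` with tail `x^γ · P(ξ > x) → 1`,
`γ ∈ (0,1]`, and any positive sequence `c_n` with `sup_n n^{1/γ-1} c_n < L` for some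
`L > 0`, there is a constant `c > 0` such that for all sufficiently large `n`,
`P(S_n ≤ c_n n^{1/γ}) ≤ exp(−c·n)`. -/
theorem statement4 {Ω : Type*} [MeasurableSpace Ω] (P : Measure Ω) [IsProbabilityMeasure P]
    (γ : ℝ) (hγ : γ ∈ Set.Ioc (0 : ℝ) 1)
    (ξ : ℕ → Ω → ℝ) (hmeas : ∀ n, Measurable (ξ n))
    (hnonneg : ∀ n ω, 0 ≤ ξ n ω)
    (hindep : ProbabilityTheory.iIndepFun ξ P)
    (hident : ∀ n, P.map (ξ n) = P.map (ξ 0))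
    (htail : Tendsto (fun x : ℝ => x ^ γ * (P {ω | x < ξ 0 ω}).toReal) atTop (nhds 1))
    (c' : ℕ → ℝ) (hc'pos : ∀ n, 0 < c' n)
    (L : ℝ) (hL : 0 < L) (hsup : ∀ n : ℕ, (n : ℝ) ^ (1 / γ - 1) * c' n < L) :
    ∃ c > (0 : ℝ), ∀ᶠ n : ℕ in atTop,
      (P {ω | ∑ l ∈ Finset.range n, ξ l ω ≤ c' n * (n : ℝ) ^ (1 / γ)}).toReal ≤
        Real.exp (-(c * n)) :=
  statement4_general P γ hγ ξ hmeas hnonneg hindep hident htail c' L hL hsup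
end

section
/- Suppose Γ_i(T) < 1 for every i ∈ {1,…,K}. If α and α′ are two bounded solutions of the linear renewal system on the horizon T (both satisfying the boundary convention α_{i,j}(t,a) = 1 for a ≥ t), then α_{i,j}(t,a) = α′_{i,j}(t,a) for all i, j ∈ {1,…,K} and all 0 ≤ a < t ≤ T; that is, the system has at most one bounded solution. -/
open MeasureTheory Set

/-
The difference δ = α - α' satisfies the homogeneous renewal system: the source term
1 - Γ_i(t) cancels. Each equation writes δ_{i,j}(t, a) as an integral, over a subset of [0, T],
of a convex combination (weights m_{i,k}) of values of δ at points of the region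
0 ≤ a < t ≤ T, or at points with a ≥ t, where δ vanishes. Hence |δ| ≤ D on the region implies
|δ| ≤ q D there, with q = max_i Γ_i(T) < 1. For D = sup |δ|, finite since both solutions are
bounded, this gives D ≤ q D, so D = 0.
-/

/-- A bounded solution of the linear renewal system on the horizon `T`: a family of
bounded measurable functions `α i j : [0,T] × [0,∞) → ℝ` (here defined on all of
`ℝ × ℝ`) satisfying the boundary convention `α i j t a = 1` for `a ≥ t` and, for
`0 ≤ a < t ≤ T`, the renewal equations with Lebesgue–Stieltjes integrals against the
lifetime distributions `μ i` (the measures whose distribution functions are `Γ_i`). -/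
def IsLinearRenewalSolution {K : ℕ} (m : Fin (K + 1) → Fin (K + 1) → ℝ)
    (μ : Fin (K + 1) → Measure ℝ) (T : ℝ)
    (α : Fin (K + 1) → Fin (K + 1) → ℝ → ℝ → ℝ) : Prop :=
  (∀ i j, Measurable (Function.uncurry (α i j))) ∧
  (∃ C : ℝ, ∀ i j t a, |α i j t a| ≤ C) ∧
  (∀ i j : Fin (K + 1), ∀ t a : ℝ, t ≤ a → α i j t a = 1) ∧
  (∀ i : Fin (K + 1), ∀ t a : ℝ, 0 ≤ a → a < t → t ≤ T →
    α i i t a = ∫ s in Icc (0 : ℝ) a, (∑ k, m i k * α k i (t - s) (a - s)) ∂(μ i)) ∧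
  (∀ i j : Fin (K + 1), j ≠ i → ∀ t a : ℝ, 0 ≤ a → a < t → t ≤ T →
    α i j t a = (1 - (μ i (Iic t)).toReal) +
      ∫ s in Icc (0 : ℝ) t, (∑ k, m i k * α k j (t - s) a) ∂(μ i))

theorem abs_sum_mul_le_of_abs_le {ι : Type*} [Fintype ι] {w : ι → ℝ} (hw_nonneg : ∀ k, 0 ≤ w k)
    (hw_sum : ∑ k, w k = 1) {f : ι → ℝ} {D : ℝ} (hf : ∀ k, |f k| ≤ D) :
    |∑ k, w k * f k| ≤ D :=
  calc |∑ k, w k * f k| ≤ ∑ k, |w k * f k| := Finset.abs_sum_le_sum_abs _ _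
    _ ≤ ∑ k, w k * D := Finset.sum_le_sum fun k _ => by
        rw [abs_mul, abs_of_nonneg (hw_nonneg k)]
        exact mul_le_mul_of_nonneg_left (hf k) (hw_nonneg k)
    _ = D := by rw [← Finset.sum_mul, hw_sum, one_mul]

theorem abs_sum_mul_sub_sum_mul_le {ι : Type*} [Fintype ι] {w : ι → ℝ}
    (hw_nonneg : ∀ k, 0 ≤ w k) (hw_sum : ∑ k, w k = 1) {f g : ι → ℝ} {D : ℝ}
    (hfg : ∀ k, |f k - g k| ≤ D) :
    |∑ k, w k * f k - ∑ k, w k * g k| ≤ D := by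
  simpa only [← Finset.sum_sub_distrib, ← mul_sub] using
    abs_sum_mul_le_of_abs_le hw_nonneg hw_sum hfg

theorem abs_setIntegral_sub_le {X : Type*} [MeasurableSpace X] {ν : Measure X}
    [IsFiniteMeasure ν] {E : Set X} {f g : X → ℝ} (hf : IntegrableOn f E ν)
    (hg : IntegrableOn g E ν) {D : ℝ} (hfg : ∀ s ∈ E, |f s - g s| ≤ D) :
    |∫ s in E, f s ∂ν - ∫ s in E, g s ∂ν| ≤ D * (ν E).toReal := by
  rw [← integral_sub hf hg]
  simpa only [Real.norm_eq_abs, measureReal_def] using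
    norm_setIntegral_le_of_norm_le_const (f := fun s => f s - g s) (measure_lt_top ν E) hfg

theorem eq_zero_of_le_mul_of_forall_le {ι : Type*} {S : Set ι} {f : ι → ℝ} {q : ℝ}
    (hq : q < 1) (hf_bdd : BddAbove (f '' S)) (hf_nonneg : ∀ x ∈ S, 0 ≤ f x)
    (hf_contr : ∀ D, 0 ≤ D → (∀ x ∈ S, f x ≤ D) → ∀ x ∈ S, f x ≤ q * D) :
    ∀ x ∈ S, f x = 0 := by
  intro x hx
  set D := sSup (f '' S)
  have hle_D : ∀ y ∈ S, f y ≤ D := fun y hy => le_csSup hf_bdd (mem_image_of_mem f hy)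
  have hD_nonneg : 0 ≤ D := (hf_nonneg x hx).trans (hle_D x hx)
  have hD_le : D ≤ q * D :=
    csSup_le ⟨f x, mem_image_of_mem f hx⟩ (forall_mem_image.2 (hf_contr D hD_nonneg hle_D))
  have hD : D = 0 := by nlinarith
  exact le_antisymm (hD ▸ hle_D x hx) (hf_nonneg x hx)

namespace IsLinearRenewalSolution

variable {K : ℕ} {m : Fin (K + 1) → Fin (K + 1) → ℝ} {μ : Fin (K + 1) → Measure ℝ} {T : ℝ}
  {α α' : Fin (K + 1) → Fin (K + 1) → ℝ → ℝ → ℝ}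

theorem integrable_sum_mul (hm_nonneg : ∀ i j, 0 ≤ m i j) (hm_row : ∀ i, ∑ j, m i j = 1)
    (hα : IsLinearRenewalSolution m μ T α) {X : Type*} [MeasurableSpace X] (ν : Measure X)
    [IsFiniteMeasure ν] (i j : Fin (K + 1)) {g : X → ℝ × ℝ} (hg : Measurable g) :
    Integrable (fun s => ∑ k, m i k * α k j (g s).1 (g s).2) ν := by
  obtain ⟨hmeas, ⟨C, hC⟩, -⟩ := hα
  have hmeas_sum : Measurable fun s => ∑ k, m i k * α k j (g s).1 (g s).2 :=
    Finset.measurable_sum _ fun k _ => ((hmeas k j).comp hg).const_mul (m i k)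
  exact Integrable.of_bound hmeas_sum.aestronglyMeasurable C
    (Filter.Eventually.of_forall fun s => abs_sum_mul_le_of_abs_le (hm_nonneg i) (hm_row i)
      fun k => hC k j _ _)

theorem abs_sub_le_mul (hm_nonneg : ∀ i j, 0 ≤ m i j) (hm_row : ∀ i, ∑ j, m i j = 1)
    [∀ i, IsFiniteMeasure (μ i)] (hα : IsLinearRenewalSolution m μ T α)
    (hα' : IsLinearRenewalSolution m μ T α') {D : ℝ} (hD : 0 ≤ D)
    (hδ : ∀ i j t a, 0 ≤ a → a < t → t ≤ T → |α i j t a - α' i j t a| ≤ D)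
    (i j : Fin (K + 1)) (t a : ℝ) (ha : 0 ≤ a) (hat : a < t) (htT : t ≤ T) :
    |α i j t a - α' i j t a| ≤ D * (μ i (Iic T)).toReal := by
  have hδ' : ∀ i j t a, 0 ≤ a → t ≤ T → |α i j t a - α' i j t a| ≤ D := by
    intro i j t a ha htT
    rcases lt_or_ge a t with hat | hta
    · exact hδ i j t a ha hat htT
    · rwa [hα.2.2.1 i j t a hta, hα'.2.2.1 i j t a hta, sub_self, abs_zero]
  have hΓ_mono : ∀ {E : Set ℝ}, E ⊆ Iic T →
      D * (μ i E).toReal ≤ D * (μ i (Iic T)).toReal :=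
    fun hE => mul_le_mul_of_nonneg_left (ENNReal.toReal_mono (measure_ne_top _ _)
      (measure_mono hE)) hD
  have hint : ∀ γ, IsLinearRenewalSolution m μ T γ → ∀ {g : ℝ → ℝ × ℝ}, Measurable g →
      ∀ E, IntegrableOn (fun s => ∑ k, m i k * γ k j (g s).1 (g s).2) E (μ i) :=
    fun γ hγ _ hg E => hγ.integrable_sum_mul hm_nonneg hm_row _ i j hg
  rcases eq_or_ne j i with rfl | hji
  · rw [hα.2.2.2.1 j t a ha hat htT, hα'.2.2.2.1 j t a ha hat htT]
    have hg : Measurable fun s : ℝ => (t - s, a - s) := by fun_prop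
    refine (abs_setIntegral_sub_le (hint α hα hg _) (hint α' hα' hg _)
      fun s hs => ?_).trans
      (hΓ_mono fun s hs => hs.2.trans (hat.trans_le htT).le)
    exact abs_sum_mul_sub_sum_mul_le (hm_nonneg j) (hm_row j) fun k =>
      hδ' k j _ _ (by linarith [hs.2]) (by linarith [hs.1])
  · rw [hα.2.2.2.2 i j hji t a ha hat htT, hα'.2.2.2.2 i j hji t a ha hat htT,
      add_sub_add_left_eq_sub]
    have hg : Measurable fun s : ℝ => (t - s, a) := by fun_prop
    refine (abs_setIntegral_sub_le (hint α hα hg _) (hint α' hα' hg _)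
      fun s hs => ?_).trans
      (hΓ_mono fun s hs => hs.2.trans htT)
    exact abs_sum_mul_sub_sum_mul_le (hm_nonneg i) (hm_row i) fun k =>
      hδ' k j _ _ ha (by linarith [hs.1])

end IsLinearRenewalSolution

theorem statement8_general {K : ℕ} (m : Fin (K + 1) → Fin (K + 1) → ℝ)
    (hm_nonneg : ∀ i j, 0 ≤ m i j) (hm_row : ∀ i, ∑ j, m i j = 1)
    (μ : Fin (K + 1) → Measure ℝ) [∀ i, IsProbabilityMeasure (μ i)]
    (T : ℝ) (hΓT : ∀ i, (μ i (Iic T)).toReal < 1)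
    (α α' : Fin (K + 1) → Fin (K + 1) → ℝ → ℝ → ℝ)
    (hα : IsLinearRenewalSolution m μ T α) (hα' : IsLinearRenewalSolution m μ T α') :
    ∀ i j : Fin (K + 1), ∀ t a : ℝ, 0 ≤ a → a < t → t ≤ T → α i j t a = α' i j t a := by
  set q := Finset.univ.sup' Finset.univ_nonempty fun i => (μ i (Iic T)).toReal
  have hq : q < 1 := (Finset.sup'_lt_iff _).2 fun i _ => hΓT i
  have hΓ_le_q : ∀ i, (μ i (Iic T)).toReal ≤ q := fun i =>
    Finset.le_sup' (fun i => (μ i (Iic T)).toReal) (Finset.mem_univ i)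
  obtain ⟨C, hC⟩ := hα.2.1
  obtain ⟨C', hC'⟩ := hα'.2.1
  let S : Set (Fin (K + 1) × Fin (K + 1) × ℝ × ℝ) :=
    {x | 0 ≤ x.2.2.2 ∧ x.2.2.2 < x.2.2.1 ∧ x.2.2.1 ≤ T}
  let δ : Fin (K + 1) × Fin (K + 1) × ℝ × ℝ → ℝ := fun ⟨i, j, t, a⟩ => |α i j t a - α' i j t a|
  have hδ_bdd : BddAbove (δ '' S) := ⟨C + C', forall_mem_image.2 fun _ _ =>
    (abs_sub _ _).trans (add_le_add (hC _ _ _ _) (hC' _ _ _ _))⟩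
  have hδ_contr : ∀ D, 0 ≤ D → (∀ x ∈ S, δ x ≤ D) → ∀ x ∈ S, δ x ≤ q * D :=
    fun D hD hδD ⟨i, j, t, a⟩ ⟨ha, hat, htT⟩ =>
      (hα.abs_sub_le_mul hm_nonneg hm_row hα' hD (fun i j t a ha hat htT =>
        hδD (i, j, t, a) ⟨ha, hat, htT⟩) i j t a ha hat htT).trans
        (by rw [mul_comm q]; exact mul_le_mul_of_nonneg_left (hΓ_le_q i) hD)
  have hδ_zero := eq_zero_of_le_mul_of_forall_le hq hδ_bdd (fun x _ => abs_nonneg _) hδ_contr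
  intro i j t a ha hat htT
  exact sub_eq_zero.1 (abs_eq_zero.1 (hδ_zero (i, j, t, a) ⟨ha, hat, htT⟩))

/-- if `Γ_i(T) < 1` for every type `i`, then the linear renewal system on
the horizon `T` has at most one bounded solution: any two bounded solutions agree for
all `i, j` and all `0 ≤ a < t ≤ T`. -/
theorem statement8 {K : ℕ} (m : Fin (K + 1) → Fin (K + 1) → ℝ)
    (hm_nonneg : ∀ i j, 0 ≤ m i j) (hm_row : ∀ i, ∑ j, m i j = 1)
    (μ : Fin (K + 1) → Measure ℝ) [∀ i, IsProbabilityMeasure (μ i)]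
    (hsupp : ∀ i, μ i (Iic 0) = 0)
    (T : ℝ) (hT : 0 < T) (hΓT : ∀ i, (μ i (Iic T)).toReal < 1)
    (α α' : Fin (K + 1) → Fin (K + 1) → ℝ → ℝ → ℝ)
    (hα : IsLinearRenewalSolution m μ T α) (hα' : IsLinearRenewalSolution m μ T α') :
    ∀ i j : Fin (K + 1), ∀ t a : ℝ, 0 ≤ a → a < t → t ≤ T → α i j t a = α' i j t a :=
  statement8_general m hm_nonneg hm_row μ T hΓT α α' hα hα'
end

section
/- Let f_1, …, f_K : [0,1]^K → [0,1] satisfy 1 − f_i(1 − z) ≤ Σ_{k=1}^K m_{i,k} z_k for every z ∈ [0,1]^K and every i. Suppose Γ_i(T) < 1 for every i. Let ν_{i,j} : [0,T] × [0,∞) → [0,1] satisfy, for all 0 ≤ a < t ≤ T: ν_{i,i}(t,a) = ∫_{[0,a]} [1 − f_i(1 − ν_{·,i}(t−s, a−s))] dΓ_i(s), and for j ≠ i: ν_{i,j}(t,a) = 1 − Γ_i(t) + ∫_{[0,t]} [1 − f_i(1 − ν_{·,j}(t−s, a))] dΓ_i(s), where ν_{·,j}(u,b) denotes the vector (ν_{1,j}(u,b),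 …, ν_{K,j}(u,b)) and values ν_{k,j}(u,b) with b ≥ u are understood via the given function. Let α be a bounded solution of the linear renewal system on [0,T] with boundary convention α_{i,j}(t,a) = 1 for a ≥ t. Then ν_{i,j}(t,a) ≤ α_{i,j}(t,a) for all i, j and all 0 ≤ a < t ≤ T. -/
/-!
Let `d = sup (ν - α)` over the interior points `0 ≤ a < t ≤ T`, with `d⁺ = max d 0`. On the
boundary `a ≥ t` we have `ν ≤ 1 = α`, so `ν - α ≤ d⁺` at every argument the renewal equations
evaluate. The hypothesis on `f` bounds `1 - f_i(1 - ν)` by the `m`-weighted average of `ν`,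
which is at most the same average of `α` plus `d⁺`. Subtracting the two renewal equations
therefore gives `ν - α ≤ Γ_i(T) d⁺ ≤ c d⁺` with `c = max_i Γ_i(T) < 1`, so `d ≤ c d⁺`,
which forces `d ≤ 0`.
-/

open MeasureTheory Set

theorem nonpos_of_mem_of_upperBounds_contract {S : Set ℝ} {c : ℝ} (hS : BddAbove S) (hc : c < 1)
    (h : ∀ B ∈ upperBounds S, 0 ≤ B → ∀ x ∈ S, x ≤ c * B) : ∀ x ∈ S, x ≤ 0 := by
  by_contra! ⟨x, hxS, hx⟩
  have hM : 0 < sSup S := hx.trans_le (le_csSup hS hxS)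
  have hMc : sSup S ≤ c * sSup S := csSup_le ⟨x, hxS⟩ (h _ (fun _ hy => le_csSup hS hy) hM.le)
  nlinarith

theorem one_sub_le_sum_mul_add {ι : Type*} [Fintype ι] {p : ι → ℝ} (hp0 : ∀ k, 0 ≤ p k)
    (hp1 : ∑ k, p k = 1) {φ : (ι → ℝ) → ℝ}
    (hφ : ∀ z : ι → ℝ, (∀ k, z k ∈ Icc (0 : ℝ) 1) → 1 - φ (fun k => 1 - z k) ≤ ∑ k, p k * z k)
    {v w : ι → ℝ} {B : ℝ} (hv : ∀ k, v k ∈ Icc (0 : ℝ) 1) (hvw : ∀ k, v k ≤ w k + B) :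
    1 - φ (fun k => 1 - v k) ≤ ∑ k, p k * w k + B :=
  calc 1 - φ (fun k => 1 - v k) ≤ ∑ k, p k * v k := hφ v hv
    _ ≤ ∑ k, p k * (w k + B) := by gcongr with k; exacts [hp0 k, hvw k]
    _ = ∑ k, p k * w k + B := by
        simp only [mul_add, Finset.sum_add_distrib, ← Finset.sum_mul, hp1, one_mul]

-- Only `G` must be integrable: the integrand `1 - f_i (1 - ν)` it bounds need not be measurable.
theorem setIntegral_le_setIntegral_add_of_le_add {X : Type*} [MeasurableSpace X] {μ : Measure X}
    [IsFiniteMeasure μ] {s : Set X} (hs : MeasurableSet s) {g G : X → ℝ} {B : ℝ}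
    (hg : ∀ x ∈ s, 0 ≤ g x) (hG : IntegrableOn G s μ) (hgG : ∀ x ∈ s, g x ≤ G x + B) :
    ∫ x in s, g x ∂μ ≤ ∫ x in s, G x ∂μ + μ.real s * B := by
  have hB : IntegrableOn (fun _ => B) s μ := integrableOn_const
  calc ∫ x in s, g x ∂μ ≤ ∫ x in s, (G x + B) ∂μ :=
        integral_mono_of_nonneg (ae_restrict_of_forall_mem hs hg) (hG.add hB)
          (ae_restrict_of_forall_mem hs hgG)
    _ = ∫ x in s, G x ∂μ + μ.real s * B := by
        rw [integral_add hG hB, setIntegral_const, smul_eq_mul]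

theorem setIntegral_one_sub_le {X : Type*} [MeasurableSpace X] {μ : Measure X}
    [IsFiniteMeasure μ] {s : Set X} (hs : MeasurableSet s) {ι : Type*} [Fintype ι]
    {p : ι → ℝ} (hp0 : ∀ k, 0 ≤ p k) (hp1 : ∑ k, p k = 1) {φ : (ι → ℝ) → ℝ}
    (hφ_range : ∀ z : ι → ℝ, (∀ k, z k ∈ Icc (0 : ℝ) 1) → φ z ∈ Icc (0 : ℝ) 1)
    (hφ : ∀ z : ι → ℝ, (∀ k, z k ∈ Icc (0 : ℝ) 1) → 1 - φ (fun k => 1 - z k) ≤ ∑ k, p k * z k)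
    {V W : ι → X → ℝ} {B : ℝ} (hV : ∀ k x, V k x ∈ Icc (0 : ℝ) 1)
    (hW : ∀ k, IntegrableOn (W k) s μ) (hVW : ∀ x ∈ s, ∀ k, V k x ≤ W k x + B) :
    ∫ x in s, (1 - φ (fun k => 1 - V k x)) ∂μ ≤ ∫ x in s, ∑ k, p k * W k x ∂μ + μ.real s * B := by
  refine setIntegral_le_setIntegral_add_of_le_add hs (fun x _ => ?_)
    (integrable_finsetSum _ fun k _ => (hW k).const_mul (p k))
    (fun x hx => one_sub_le_sum_mul_add hp0 hp1 hφ (hV · x) (hVW x hx))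
  have h1V : ∀ k, 1 - V k x ∈ Icc (0 : ℝ) 1 := fun k =>
    ⟨by linarith [(hV k x).2], by linarith [(hV k x).1]⟩
  linarith [(hφ_range _ h1V).2]

theorem renewal_sub_le_mul {K : ℕ} {m : Fin (K + 1) → Fin (K + 1) → ℝ}
    (hm_nonneg : ∀ i j, 0 ≤ m i j) (hm_row : ∀ i, ∑ j, m i j = 1)
    {μ : Fin (K + 1) → Measure ℝ} [∀ i, IsProbabilityMeasure (μ i)] {T : ℝ}
    {f : Fin (K + 1) → (Fin (K + 1) → ℝ) → ℝ}
    (hf_range : ∀ i s, (∀ k, s k ∈ Icc (0 : ℝ) 1) → f i s ∈ Icc (0 : ℝ) 1)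
    (hf_dom : ∀ i, ∀ z : Fin (K + 1) → ℝ, (∀ k, z k ∈ Icc (0 : ℝ) 1) →
      1 - f i (fun k => 1 - z k) ≤ ∑ k, m i k * z k)
    {ν : Fin (K + 1) → Fin (K + 1) → ℝ → ℝ → ℝ}
    (hν_range : ∀ i j t a, ν i j t a ∈ Icc (0 : ℝ) 1)
    (hν_diag : ∀ i : Fin (K + 1), ∀ t a : ℝ, 0 ≤ a → a < t → t ≤ T →
      ν i i t a = ∫ s in Icc (0 : ℝ) a,
        (1 - f i (fun k => 1 - ν k i (t - s) (a - s))) ∂(μ i))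
    (hν_off : ∀ i j : Fin (K + 1), j ≠ i → ∀ t a : ℝ, 0 ≤ a → a < t → t ≤ T →
      ν i j t a = (1 - (μ i (Iic t)).toReal) +
        ∫ s in Icc (0 : ℝ) t, (1 - f i (fun k => 1 - ν k j (t - s) a)) ∂(μ i))
    {α : Fin (K + 1) → Fin (K + 1) → ℝ → ℝ → ℝ} (hα : IsLinearRenewalSolution m μ T α)
    {B : ℝ} (hB0 : 0 ≤ B)
    (hB : ∀ i j t a, 0 ≤ a → a < t → t ≤ T → ν i j t a - α i j t a ≤ B)
    {i j : Fin (K + 1)} {t a : ℝ} (ha : 0 ≤ a) (hat : a < t) (htT : t ≤ T) :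
    ν i j t a - α i j t a ≤ (μ i (Iic T)).toReal * B := by
  obtain ⟨hα_meas, ⟨C, hC⟩, hα_one, hα_diag, hα_off⟩ := hα
  have hνα : ∀ k j t a, 0 ≤ a → t ≤ T → ν k j t a ≤ α k j t a + B := by
    intro k j t a ha htT
    rcases lt_or_ge a t with hat | hta
    · linarith [hB k j t a ha hat htT]
    · linarith [hα_one k j t a hta, (hν_range k j t a).2]
  have hα_int : ∀ k j (τ σ : ℝ → ℝ), Measurable τ → Measurable σ → ∀ u,
      IntegrableOn (fun s => α k j (τ s) (σ s)) (Icc 0 u) (μ i) := fun k j τ σ hτ hσ u =>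
    (Integrable.of_bound ((hα_meas k j).comp (hτ.prodMk hσ)).aestronglyMeasurable C
      (ae_of_all _ fun s => hC k j _ _)).integrableOn
  have hΓ : ∀ u ≤ T, (μ i).real (Icc 0 u) * B ≤ (μ i (Iic T)).toReal * B := fun u hu =>
    mul_le_mul_of_nonneg_right (measureReal_mono fun s hs => hs.2.trans hu) hB0
  rcases eq_or_ne j i with rfl | hji
  · have h := setIntegral_one_sub_le measurableSet_Icc (hm_nonneg j) (hm_row j) (hf_range j)
      (hf_dom j) (V := fun k s => ν k j (t - s) (a - s)) (fun k s => hν_range k j _ _)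
      (fun k => hα_int k j _ _ (by fun_prop) (by fun_prop) a)
      (fun s hs k => hνα k j _ _ (by linarith [hs.2]) (by linarith [hs.1]))
    rw [hν_diag j t a ha hat htT, hα_diag j t a ha hat htT]
    linarith [hΓ a (hat.le.trans htT)]
  · have h := setIntegral_one_sub_le measurableSet_Icc (hm_nonneg i) (hm_row i) (hf_range i)
      (hf_dom i) (V := fun k s => ν k j (t - s) a) (fun k s => hν_range k j _ _)
      (fun k => hα_int k j _ _ (by fun_prop) (by fun_prop) t)
      (fun s hs k => hνα k j _ _ ha (by linarith [hs.1]))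
    rw [hν_off i j hji t a ha hat htT, hα_off i j hji t a ha hat htT]
    linarith [hΓ t htT]

theorem statement9_general {K : ℕ} (m : Fin (K + 1) → Fin (K + 1) → ℝ)
    (hm_nonneg : ∀ i j, 0 ≤ m i j) (hm_row : ∀ i, ∑ j, m i j = 1)
    (μ : Fin (K + 1) → Measure ℝ) [∀ i, IsProbabilityMeasure (μ i)]
    (T : ℝ) (hΓT : ∀ i, (μ i (Iic T)).toReal < 1)
    (f : Fin (K + 1) → (Fin (K + 1) → ℝ) → ℝ)
    (hf_range : ∀ i s, (∀ k, s k ∈ Icc (0 : ℝ) 1) → f i s ∈ Icc (0 : ℝ) 1)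
    (hf_dom : ∀ i, ∀ z : Fin (K + 1) → ℝ, (∀ k, z k ∈ Icc (0 : ℝ) 1) →
      1 - f i (fun k => 1 - z k) ≤ ∑ k, m i k * z k)
    (ν : Fin (K + 1) → Fin (K + 1) → ℝ → ℝ → ℝ)
    (hν_range : ∀ i j t a, ν i j t a ∈ Icc (0 : ℝ) 1)
    (hν_diag : ∀ i : Fin (K + 1), ∀ t a : ℝ, 0 ≤ a → a < t → t ≤ T →
      ν i i t a = ∫ s in Icc (0 : ℝ) a,
        (1 - f i (fun k => 1 - ν k i (t - s) (a - s))) ∂(μ i))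
    (hν_off : ∀ i j : Fin (K + 1), j ≠ i → ∀ t a : ℝ, 0 ≤ a → a < t → t ≤ T →
      ν i j t a = (1 - (μ i (Iic t)).toReal) +
        ∫ s in Icc (0 : ℝ) t, (1 - f i (fun k => 1 - ν k j (t - s) a)) ∂(μ i))
    (α : Fin (K + 1) → Fin (K + 1) → ℝ → ℝ → ℝ)
    (hα : IsLinearRenewalSolution m μ T α) :
    ∀ i j : Fin (K + 1), ∀ t a : ℝ, 0 ≤ a → a < t → t ≤ T → ν i j t a ≤ α i j t a := by
  obtain ⟨i₀, hi₀⟩ := Finite.exists_max fun i => (μ i (Iic T)).toReal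
  obtain ⟨C, hC⟩ := hα.2.1
  set S : Set ℝ := {ν i j t a - α i j t a | (i) (j) (t) (a) (_ : 0 ≤ a ∧ a < t ∧ t ≤ T)}
  have hS : BddAbove S := ⟨1 + C, by
    rintro _ ⟨i, j, t, a, -, rfl⟩
    linarith [(hν_range i j t a).2, neg_le_of_abs_le (hC i j t a)]⟩
  have hS_nonpos := nonpos_of_mem_of_upperBounds_contract hS (hΓT i₀) fun B hB hB0 => by
    rintro _ ⟨i, j, t, a, ⟨ha, hat, htT⟩, rfl⟩
    calc ν i j t a - α i j t a ≤ (μ i (Iic T)).toReal * B :=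
          renewal_sub_le_mul hm_nonneg hm_row hf_range hf_dom hν_range hν_diag hν_off hα hB0
            (fun i j t a ha hat htT => hB ⟨i, j, t, a, ⟨ha, hat, htT⟩, rfl⟩) ha hat htT
      _ ≤ (μ i₀ (Iic T)).toReal * B := mul_le_mul_of_nonneg_right (hi₀ i) hB0
  intro i j t a ha hat htT
  exact sub_nonpos.1 (hS_nonpos _ ⟨i, j, t, a, ⟨ha, hat, htT⟩, rfl⟩)

/-- if the offspring generating functions satisfy
`1 − f_i(1 − z) ≤ Σ_k m_{i,k} z_k` on `[0,1]^K`, `Γ_i(T) < 1` for every `i`, and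
`ν` is a `[0,1]`-valued solution of the nonlinear renewal system on `[0,T]`, then `ν`
is dominated by any bounded solution `α` of the linear renewal system:
`ν i j t a ≤ α i j t a` for all `i, j` and `0 ≤ a < t ≤ T`. -/
theorem statement9 {K : ℕ} (m : Fin (K + 1) → Fin (K + 1) → ℝ)
    (hm_nonneg : ∀ i j, 0 ≤ m i j) (hm_row : ∀ i, ∑ j, m i j = 1)
    (μ : Fin (K + 1) → Measure ℝ) [∀ i, IsProbabilityMeasure (μ i)]
    (hsupp : ∀ i, μ i (Iic 0) = 0)
    (T : ℝ) (hT : 0 < T) (hΓT : ∀ i, (μ i (Iic T)).toReal < 1)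
    (f : Fin (K + 1) → (Fin (K + 1) → ℝ) → ℝ)
    (hf_range : ∀ i s, (∀ k, s k ∈ Icc (0 : ℝ) 1) → f i s ∈ Icc (0 : ℝ) 1)
    (hf_dom : ∀ i, ∀ z : Fin (K + 1) → ℝ, (∀ k, z k ∈ Icc (0 : ℝ) 1) →
      1 - f i (fun k => 1 - z k) ≤ ∑ k, m i k * z k)
    (ν : Fin (K + 1) → Fin (K + 1) → ℝ → ℝ → ℝ)
    (hν_meas : ∀ i j, Measurable (Function.uncurry (ν i j)))
    (hν_range : ∀ i j t a, ν i j t a ∈ Icc (0 : ℝ) 1)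
    (hν_diag : ∀ i : Fin (K + 1), ∀ t a : ℝ, 0 ≤ a → a < t → t ≤ T →
      ν i i t a = ∫ s in Icc (0 : ℝ) a,
        (1 - f i (fun k => 1 - ν k i (t - s) (a - s))) ∂(μ i))
    (hν_off : ∀ i j : Fin (K + 1), j ≠ i → ∀ t a : ℝ, 0 ≤ a → a < t → t ≤ T →
      ν i j t a = (1 - (μ i (Iic t)).toReal) +
        ∫ s in Icc (0 : ℝ) t, (1 - f i (fun k => 1 - ν k j (t - s) a)) ∂(μ i))
    (α : Fin (K + 1) → Fin (K + 1) → ℝ → ℝ → ℝ)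
    (hα : IsLinearRenewalSolution m μ T α) :
    ∀ i j : Fin (K + 1), ∀ t a : ℝ, 0 ≤ a → a < t → t ≤ T → ν i j t a ≤ α i j t a :=
  statement9_general m hm_nonneg hm_row μ T hΓT f hf_range hf_dom ν hν_range hν_diag hν_off α hα
end
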